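/- There is no pair of integers (a,n) with a^2 · 74 = 2n^2 + 2n + 2. -/

import Mathlib

/-!
Multiplying `x + y√37` by `-6 + √37`, a unit of norm `-1`, sends a solution of
`x² - 37y² = ±3` with `0 ≤ x` and `2 ≤ y` to one of `x² - 37y² = ∓3` whose `y`-coordinate
`x - 6y` lies in `(0, y)`. Descending, one reaches `y ∈ {0, 1}`, where `±3`, `34` and `40` are
not squares. The equation of the theorem is `(2n + 1)² - 37(2a)² = -3` after multiplying by `2`.
-/

theorem sq_sub_37_mul_sq_unit_mul (x y : ℤ) :
    (37 * y - 6 * x) ^ 2 - 37 * (x - 6 * y) ^ 2 = -(x ^ 2 - 37 * y ^ 2) := by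
  ring

theorem abs_sq_sub_37_mul_sq_ne_three_of_lt_two {x y : ℤ} (hx : 0 ≤ x) (hy₀ : 0 ≤ y)
    (hy : y < 2) : |x ^ 2 - 37 * y ^ 2| ≠ 3 := by
  intro h
  have hx7 : x < 7 := by
    rw [abs_eq (by norm_num)] at h
    interval_cases y <;> rcases h with h | h <;> nlinarith
  interval_cases y <;> interval_cases x <;> norm_num at h

theorem lt_and_le_of_abs_sq_sub_37_mul_sq_eq_three {x y : ℤ} (hx : 0 ≤ x) (hy : 2 ≤ y)
    (h : |x ^ 2 - 37 * y ^ 2| = 3) : 6 * y < x ∧ 6 * x ≤ 37 * y := by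
  obtain ⟨hlo, hhi⟩ := abs_le.mp h.le
  constructor <;> nlinarith

theorem abs_sq_sub_37_mul_sq_ne_three_of_nonneg {x y : ℤ} (hx : 0 ≤ x) (hy : 0 ≤ y) :
    |x ^ 2 - 37 * y ^ 2| ≠ 3 := by
  induction hn : y.toNat using Nat.strong_induction_on generalizing x y with
  | _ n ih =>
    intro h
    by_cases hy2 : y < 2
    · exact abs_sq_sub_37_mul_sq_ne_three_of_lt_two hx hy hy2 h
    obtain ⟨hlo, hhi⟩ := lt_and_le_of_abs_sq_sub_37_mul_sq_eq_three hx (not_lt.mp hy2) h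
    refine ih (x - 6 * y).toNat (by omega) (x := 37 * y - 6 * x) (by omega) (by omega) rfl ?_
    rw [sq_sub_37_mul_sq_unit_mul, abs_neg, h]

theorem abs_sq_sub_37_mul_sq_ne_three (x y : ℤ) : |x ^ 2 - 37 * y ^ 2| ≠ 3 := by
  rw [← sq_abs x, ← sq_abs y]
  exact abs_sq_sub_37_mul_sq_ne_three_of_nonneg (abs_nonneg x) (abs_nonneg y)

theorem stmt_16 : ¬ ∃ a n : ℤ, a^2 * 74 = 2*n^2 + 2*n + 2 := by
  rintro ⟨a, n, h⟩
  apply abs_sq_sub_37_mul_sq_ne_three (2 * n + 1) (2 * a)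
  rw [show (2 * n + 1) ^ 2 - 37 * (2 * a) ^ 2 = -3 by linear_combination -2 * h]
  norm_num
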